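/- Let E be a finite-dimensional real inner product space, let x : ℝ → E be differentiable, let N be a positive natural number, let h : Fin N → E → ℝ be a family of continuously differentiable barrier functions, and let α : ℝ → ℝ be strictly monotone increasing, locally Lipschitz with α 0 = 0. Assume that for every index i, h i (x 0) ≥ 0 and for every t ≥ 0, fderiv ℝ (h i) (x t) (deriv x t) ≥ −α (h i (x t)). Then for every t ≥ 0 and every index i, h i (x t) ≥ 0; that is, the trajectory remains in the intersection of the safe sets C_i = {y : h i y ≥ 0}. -/

import Mathlib

open Set

/-- Past the last time `t₀ ≤ t` at which `y` is nonnegative, `y` is negative, hence strictly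
increasing on `[t₀, t]`, so `y t > y t₀ ≥ 0`. -/
theorem nonneg_of_deriv_pos_of_neg {y : ℝ → ℝ} {a : ℝ} (hy : ContinuousOn y (Ici a))
    (ha : 0 ≤ y a) (hpos : ∀ s, a < s → y s < 0 → 0 < deriv y s) :
    ∀ t, a ≤ t → 0 ≤ y t := by
  intro t hat
  by_contra! hyt
  set S : Set ℝ := Icc a t ∩ {s | 0 ≤ y s}
  have hS_closed : IsClosed S :=
    (hy.mono Icc_subset_Ici_self).preimage_isClosed_of_isClosed isClosed_Icc isClosed_Ici
  have hS_bdd : BddAbove S := ⟨t, fun s hs => hs.1.2⟩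
  obtain ⟨⟨hat₀, ht₀t⟩, hyt₀⟩ : sSup S ∈ S :=
    hS_closed.csSup_mem ⟨a, ⟨le_rfl, hat⟩, ha⟩ hS_bdd
  set t₀ := sSup S
  have ht₀_lt : t₀ < t := ht₀t.lt_of_ne fun heq => hyt.not_ge (heq ▸ hyt₀)
  have hneg : ∀ s, t₀ < s → s ≤ t → y s < 0 := fun s hs hst => by
    by_contra! hys
    exact hs.not_ge (le_csSup hS_bdd ⟨⟨hat₀.trans hs.le, hst⟩, hys⟩)
  have hmono : StrictMonoOn y (Icc t₀ t) := by
    refine strictMonoOn_of_deriv_pos (convex_Icc t₀ t)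
      (hy.mono (Icc_subset_Ici_iff ht₀t |>.mpr hat₀)) fun s hs => ?_
    rw [interior_Icc] at hs
    exact hpos s (hat₀.trans_lt hs.1) (hneg s hs.1 hs.2.le)
  exact (hneg t ht₀_lt le_rfl).not_ge
    (hyt₀.trans (hmono ⟨le_rfl, ht₀t⟩ ⟨ht₀t, le_rfl⟩ ht₀_lt).le)

theorem nonneg_of_neg_le_deriv_of_strictMono {y α : ℝ → ℝ} {a : ℝ} (hα : StrictMono α)
    (hα0 : α 0 = 0) (hy : ContinuousOn y (Ici a)) (ha : 0 ≤ y a)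
    (hineq : ∀ s, a ≤ s → -α (y s) ≤ deriv y s) :
    ∀ t, a ≤ t → 0 ≤ y t :=
  nonneg_of_deriv_pos_of_neg hy ha fun s has hys => by
    have : α (y s) < 0 := hα0 ▸ hα hys
    linarith [hineq s has.le]

theorem cbf_intersection_forward_invariance_general
    {E : Type*} [NormedAddCommGroup E] [InnerProductSpace ℝ E]
    (x : ℝ → E) (hx : Differentiable ℝ x)
    (N : ℕ)
    (h : Fin N → E → ℝ) (hh : ∀ i, ContDiff ℝ 1 (h i))
    (α : ℝ → ℝ) (hα : StrictMono α) (hα0 : α 0 = 0)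
    (h0 : ∀ i : Fin N, 0 ≤ h i (x 0))
    (hineq : ∀ (i : Fin N) (t : ℝ), 0 ≤ t →
      -α (h i (x t)) ≤ fderiv ℝ (h i) (x t) (deriv x t)) :
    ∀ t : ℝ, 0 ≤ t → ∀ i : Fin N, 0 ≤ h i (x t) := by
  intro t ht i
  have hchain : ∀ s, HasDerivAt (fun s => h i (x s)) (fderiv ℝ (h i) (x s) (deriv x s)) s :=
    fun s => ((hh i).differentiable one_ne_zero (x s)).hasFDerivAt.comp_hasDerivAt s
      (hx s).hasDerivAt
  refine nonneg_of_neg_le_deriv_of_strictMono hα hα0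
    (fun s _ => (hchain s).continuousAt.continuousWithinAt) (h0 i) (fun s hs => ?_) t ht
  rw [(hchain s).deriv]
  exact hineq i s hs

/-- Forward invariance of the intersection of safe sets (property of the
intersected admissible control sets `K̄_j` of Definition 2 of the paper):
if each barrier `h i` starts nonnegative and satisfies its CBF inequality
along the trajectory, then all safe sets `C_i = {y : h i y ≥ 0}` are
simultaneously forward invariant. -/
theorem cbf_intersection_forward_invariance
    {E : Type*} [NormedAddCommGroup E] [InnerProductSpace ℝ E]
    [FiniteDimensional ℝ E]
    (x : ℝ → E) (hx : Differentiable ℝ x)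
    (N : ℕ) (hN : 0 < N)
    (h : Fin N → E → ℝ) (hh : ∀ i, ContDiff ℝ 1 (h i))
    (α : ℝ → ℝ) (hα : StrictMono α) (hα0 : α 0 = 0)
    (hαlip : LocallyLipschitz α)
    (h0 : ∀ i : Fin N, 0 ≤ h i (x 0))
    (hineq : ∀ (i : Fin N) (t : ℝ), 0 ≤ t →
      -α (h i (x t)) ≤ fderiv ℝ (h i) (x t) (deriv x t)) :
    ∀ t : ℝ, 0 ≤ t → ∀ i : Fin N, 0 ≤ h i (x t) :=
  cbf_intersection_forward_invariance_general x hx N h hh α hα hα0 h0 hineq
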